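/- (Main Theorem) Let {L_J : V_D → V_J}_{∅≠J⊆D} be linear operators satisfying (P2)*: ∂g/∂x_J = 0 ⇒ ∂(L_J g)/∂x_J = 0, and (P3)*: g ∈ V_J ⇒ ∂(L_J g − g)/∂x_J = 0. Define H_∅ := E and H_J := (I − Σ_{J'⊂J} H_{J'}) ∘ L_J recursively. Then {H_J}_{J⊆D} satisfies all of: (P1) H_∅ = E and E∘H_J = 0 for J ≠ ∅; (P2) ∂g/∂x_J = 0 ⇒ H_J(g) = 0; (P3) g ∈ V_J ⇒ Σ_{J'⊆J}H_{J'}(g) = g; (P4) H_J∘H_J = H_J; (P5) H_{J'}∘H_J = 0 for J' ≠ J. -/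

import Mathlib

open Finset MeasureTheory

variable {ι : Type*} [DecidableEq ι] {X : ι → Type*}

/-- Substitute the values `a i` into the coordinates `i ∈ J` of the point `x`. -/
def substPt (J : Finset ι) (a x : ∀ i, X i) : ∀ i, X i :=
  fun i => if i ∈ J then a i else x i

/-- The substitution operator `g ↦ g |_{x_J = a_J}`. -/
def substOp (J : Finset ι) (a : ∀ i, X i) (g : (∀ i, X i) → ℝ) : (∀ i, X i) → ℝ :=
  fun x => g (substPt J a x)

/-- The partial difference operator `ⱼΔ_{a_j} g = g - g|_{x_j = a_j}`. -/
def deltaOp (j : ι) (a : ∀ i, X i) (g : (∀ i, X i) → ℝ) : (∀ i, X i) → ℝ :=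
  g - substOp {j} a g

/-- The composed partial difference operator `_JΔ_{a_J}`, in its
inclusion-exclusion form `∑_{K ⊆ J} (-1)^|K| g|_{x_K = a_K}`. -/
def pdiff (J : Finset ι) (a : ∀ i, X i) (g : (∀ i, X i) → ℝ) : (∀ i, X i) → ℝ :=
  ∑ K ∈ J.powerset, ((-1 : ℝ) ^ K.card) • substOp K a g

/-- `∂g/∂x_J = 0` : all composed partial differences over `J` vanish. -/
def PDiffZero (J : Finset ι) (g : (∀ i, X i) → ℝ) : Prop :=
  ∀ a : ∀ i, X i, pdiff J a g = 0

/-- `g ∈ V_K` : `g` depends only on the coordinates in `K`. -/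
def DependsOnCoords (K : Finset ι) (g : (∀ i, X i) → ℝ) : Prop :=
  ∀ x y : ∀ i, X i, (∀ i ∈ K, x i = y i) → g x = g y

set_option linter.unusedSectionVars false

lemma substOp_empty (a : ∀ i, X i) (g : (∀ i, X i) → ℝ) : substOp ∅ a g = g := by
  funext x
  have h : substPt ∅ a x = x := by funext i; simp [substPt]
  simp only [substOp, h]

lemma dependsOn_mono {K K' : Finset ι} (h : K ⊆ K') {g : (∀ i, X i) → ℝ}
    (hg : DependsOnCoords K g) : DependsOnCoords K' g :=
  fun x y hxy => hg x y fun i hi => hxy i (h hi)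

lemma dependsOn_sub {K : Finset ι} {f g : (∀ i, X i) → ℝ}
    (hf : DependsOnCoords K f) (hg : DependsOnCoords K g) : DependsOnCoords K (f - g) := by
  intro x y hxy
  simp only [Pi.sub_apply, hf x y hxy, hg x y hxy]

lemma dependsOn_sum {K : Finset ι} {α : Type*} {s : Finset α} {F : α → (∀ i, X i) → ℝ}
    (hF : ∀ a ∈ s, DependsOnCoords K (F a)) : DependsOnCoords K (∑ a ∈ s, F a) := by
  intro x y hxy
  simp only [Finset.sum_apply]
  exact Finset.sum_congr rfl fun a ha => hF a ha x y hxy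

lemma substOp_insert_of_not_mem {M : Finset ι} {g : (∀ i, X i) → ℝ}
    (hg : DependsOnCoords M g) {j : ι} (hj : j ∉ M) (K : Finset ι) (a : ∀ i, X i) :
    substOp (insert j K) a g = substOp K a g := by
  funext x
  refine hg _ _ fun i hi => ?_
  have : i ≠ j := fun h => hj (h ▸ hi)
  simp [substPt, Finset.mem_insert, this]

lemma pdiffZero_of_not_subset {M J : Finset ι} {g : (∀ i, X i) → ℝ}
    (hg : DependsOnCoords M g) (hJ : ¬ J ⊆ M) : PDiffZero J g := by
  intro a
  obtain ⟨j, hjJ, hjM⟩ := Finset.not_subset.1 hJ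
  have hJ' : J = insert j (J.erase j) := (Finset.insert_erase hjJ).symm
  rw [pdiff, hJ', Finset.sum_powerset_insert (Finset.notMem_erase j J)]
  have : ∀ K ∈ (J.erase j).powerset,
      ((-1 : ℝ) ^ (insert j K).card) • substOp (insert j K) a g
        = -(((-1 : ℝ) ^ K.card) • substOp K a g) := by
    intro K hK
    have hjK : j ∉ K := fun h => Finset.notMem_erase j J (Finset.mem_powerset.1 hK h)
    rw [substOp_insert_of_not_mem hg hjM K a, Finset.card_insert_of_notMem hjK,
      pow_succ, ← neg_smul]
    ring_nf
  rw [Finset.sum_congr rfl this, Finset.sum_neg_distrib]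
  abel

lemma dependsOn_substOp {M : Finset ι} {g : (∀ i, X i) → ℝ}
    (hg : DependsOnCoords M g) (K : Finset ι) (a : ∀ i, X i) :
    DependsOnCoords (M \ K) (substOp K a g) := by
  intro x y hxy
  refine hg _ _ fun i hi => ?_
  by_cases h : i ∈ K
  · simp [substPt, h]
  · simp only [substPt, if_neg h]
    exact hxy i (Finset.mem_sdiff.2 ⟨hi, h⟩)

lemma expansion {J : Finset ι} {g : (∀ i, X i) → ℝ} (hg : PDiffZero J g) (a : ∀ i, X i) :
    g = ∑ K ∈ J.powerset.erase ∅, (-(-1 : ℝ) ^ K.card) • substOp K a g := by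
  have h0 : (∅ : Finset ι) ∈ J.powerset := Finset.empty_mem_powerset J
  have := hg a
  rw [pdiff, ← Finset.add_sum_erase _ _ h0] at this
  simp only [Finset.card_empty, pow_zero, one_smul, substOp_empty] at this
  have : g = -∑ K ∈ J.powerset.erase ∅, ((-1 : ℝ) ^ K.card) • substOp K a g := by
    linear_combination (norm := abel) this
  have h2 : ∑ K ∈ J.powerset.erase ∅, (-(-1 : ℝ) ^ K.card) • substOp K a g
      = -∑ K ∈ J.powerset.erase ∅, ((-1 : ℝ) ^ K.card) • substOp K a g := by
    rw [← Finset.sum_neg_distrib]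
    exact Finset.sum_congr rfl fun K _ => (neg_smul _ _)
  rw [h2]
  exact this

/-- Main Theorem: if `{L_J}` satisfies (P2)* and (P3)*, then the
recursively defined `{H_J}` satisfies (P1)-(P5). -/
theorem stmt12
    (E : ((∀ i, X i) → ℝ) →ₗ[ℝ] ((∀ i, X i) → ℝ))
    (hEconst : ∀ g : (∀ i, X i) → ℝ, DependsOnCoords (∅ : Finset ι) (E g))
    (hEfix : ∀ c : ℝ, E (fun _ => c) = fun _ => c)
    (L : Finset ι → ((∀ i, X i) → ℝ) →ₗ[ℝ] ((∀ i, X i) → ℝ))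
    (hL : ∀ J : Finset ι, J.Nonempty → ∀ g : (∀ i, X i) → ℝ, DependsOnCoords J (L J g))
    (H : Finset ι → ((∀ i, X i) → ℝ) →ₗ[ℝ] ((∀ i, X i) → ℝ))
    (hH0 : H ∅ = E)
    (hHrec : ∀ J : Finset ι, J.Nonempty → ∀ g : (∀ i, X i) → ℝ,
      H J g = L J g - ∑ J' ∈ J.powerset.erase J, H J' (L J g))
    (hP2s : ∀ J : Finset ι, J.Nonempty → ∀ g : (∀ i, X i) → ℝ,
      PDiffZero J g → PDiffZero J (L J g))
    (hP3s : ∀ J : Finset ι, J.Nonempty → ∀ g : (∀ i, X i) → ℝ,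
      DependsOnCoords J g → PDiffZero J (L J g - g)) :
    (H ∅ = E ∧
      ∀ J : Finset ι, J.Nonempty → ∀ g : (∀ i, X i) → ℝ, E (H J g) = 0) ∧
    (∀ (J : Finset ι) (g : (∀ i, X i) → ℝ), PDiffZero J g → H J g = 0) ∧
    (∀ (J : Finset ι) (g : (∀ i, X i) → ℝ), DependsOnCoords J g →
      ∑ J' ∈ J.powerset, H J' g = g) ∧
    (∀ (J : Finset ι) (g : (∀ i, X i) → ℝ), H J (H J g) = H J g) ∧
    (∀ (J' J : Finset ι), J' ≠ J → ∀ g : (∀ i, X i) → ℝ, H J' (H J g) = 0) := by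
  by_cases hne : Nonempty (∀ i, X i)
  case neg =>
    have hz : ∀ f h : (∀ i, X i) → ℝ, f = h := fun f h => funext fun x => absurd ⟨x⟩ hne
    exact ⟨⟨hH0, fun J _ g => hz _ _⟩, fun J g _ => hz _ _, fun J g _ => hz _ _,
      fun J g => hz _ _, fun J' J _ g => hz _ _⟩
  obtain ⟨a₀⟩ := hne
  -- every `H J g` depends only on the coordinates in `J`
  have Hdep : ∀ J : Finset ι, ∀ g, DependsOnCoords J (H J g) := by
    intro J
    induction J using Finset.strongInduction with
    | _ J IH =>
      intro g
      rcases Finset.eq_empty_or_nonempty J with rfl | hJne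
      · rw [hH0]; exact hEconst g
      · rw [hHrec J hJne g]
        refine dependsOn_sub (hL J hJne g) (dependsOn_sum fun J' hJ' => ?_)
        have hJ'2 := Finset.mem_erase.1 hJ'
        have hsub : J' ⊆ J := Finset.mem_powerset.1 hJ'2.2
        exact dependsOn_mono hsub (IH J' (hsub.ssubset_of_ne hJ'2.1) _)
  -- the key lemma used in the first induction
  have KL : ∀ J : Finset ι,
      (∀ t ⊂ J, (∀ g, PDiffZero t g → H t g = 0) ∧
        (∀ g, DependsOnCoords t g → ∑ J' ∈ t.powerset, H J' g = g)) →
      J.Nonempty → ∀ w, DependsOnCoords J w → PDiffZero J w →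
      ∑ J' ∈ J.powerset.erase J, H J' w = w := by
    intro J IH hJne w hdep hpz
    have hexp := expansion hpz a₀
    calc ∑ J' ∈ J.powerset.erase J, H J' w
        = ∑ J' ∈ J.powerset.erase J,
            H J' (∑ K ∈ J.powerset.erase ∅, (-(-1 : ℝ) ^ K.card) • substOp K a₀ w) := by
          rw [← hexp]
      _ = ∑ J' ∈ J.powerset.erase J, ∑ K ∈ J.powerset.erase ∅,
            (-(-1 : ℝ) ^ K.card) • H J' (substOp K a₀ w) := by
          refine Finset.sum_congr rfl fun J' _ => ?_
          rw [map_sum]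
          exact Finset.sum_congr rfl fun K _ => map_smul _ _ _
      _ = ∑ K ∈ J.powerset.erase ∅,
            (-(-1 : ℝ) ^ K.card) • ∑ J' ∈ J.powerset.erase J, H J' (substOp K a₀ w) := by
          rw [Finset.sum_comm]
          exact Finset.sum_congr rfl fun K _ => (Finset.smul_sum).symm
      _ = ∑ K ∈ J.powerset.erase ∅, (-(-1 : ℝ) ^ K.card) • substOp K a₀ w := by
          refine Finset.sum_congr rfl fun K hK => ?_
          have hK2 := Finset.mem_erase.1 hK
          have hKsub : K ⊆ J := Finset.mem_powerset.1 hK2.2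
          have hKne : K.Nonempty := Finset.nonempty_iff_ne_empty.2 hK2.1
          have hdepK : DependsOnCoords (J \ K) (substOp K a₀ w) := dependsOn_substOp hdep K a₀
          have hdiffss : J \ K ⊂ J := Finset.sdiff_ssubset hKsub hKne
          have hsub : (J \ K).powerset ⊆ J.powerset.erase J := by
            intro J' hJ'
            have h1 : J' ⊆ J \ K := Finset.mem_powerset.1 hJ'
            obtain ⟨k, hkK⟩ := hKne
            refine Finset.mem_erase.2
              ⟨?_, Finset.mem_powerset.2 (h1.trans (Finset.sdiff_subset))⟩
            rintro rfl
            exact (Finset.mem_sdiff.1 (h1 (hKsub hkK))).2 hkK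
          congr 1
          rw [← Finset.sum_subset hsub ?_]
          · exact (IH (J \ K) hdiffss).2 _ hdepK
          · intro J' hJ'in hJ'notin
            have hJ'2 := Finset.mem_erase.1 hJ'in
            have hJ'ss : J' ⊂ J := (Finset.mem_powerset.1 hJ'2.2).ssubset_of_ne hJ'2.1
            have hnsub : ¬ J' ⊆ J \ K := fun h => hJ'notin (Finset.mem_powerset.2 h)
            exact (IH J' hJ'ss).1 _ (pdiffZero_of_not_subset hdepK hnsub)
      _ = w := hexp.symm
  -- first induction: (P2) and (P3)
  have AB : ∀ J : Finset ι, (∀ g, PDiffZero J g → H J g = 0) ∧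
      (∀ g, DependsOnCoords J g → ∑ J' ∈ J.powerset, H J' g = g) := by
    intro J
    induction J using Finset.strongInduction with
    | _ J IH =>
      constructor
      · intro g hpz
        rcases Finset.eq_empty_or_nonempty J with rfl | hJne
        · have hg0 : g = 0 := by
            have h := hpz a₀
            simpa [pdiff, Finset.powerset_empty, substOp_empty] using h
          rw [hg0, map_zero]
        · rw [hHrec J hJne g, KL J IH hJne (L J g) (hL J hJne g) (hP2s J hJne g hpz),
            sub_self]
      · intro g hdep
        rcases Finset.eq_empty_or_nonempty J with rfl | hJne
        · have hgc : g = fun _ => g a₀ := funext fun x => hdep x a₀ (by simp)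
          rw [Finset.powerset_empty, Finset.sum_singleton, hH0]
          calc E g = E (fun _ => g a₀) := by rw [← hgc]
            _ = fun _ => g a₀ := hEfix _
            _ = g := hgc.symm
        · rw [← Finset.add_sum_erase _ _ (Finset.mem_powerset_self J), hHrec J hJne g]
          have hw : ∑ J' ∈ J.powerset.erase J, H J' (L J g - g) = L J g - g :=
            KL J IH hJne _ (dependsOn_sub (hL J hJne g) hdep) (hP3s J hJne g hdep)
          have hsplit : ∑ J' ∈ J.powerset.erase J, H J' (L J g - g)
              = ∑ J' ∈ J.powerset.erase J, H J' (L J g)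
                - ∑ J' ∈ J.powerset.erase J, H J' g := by
            rw [← Finset.sum_sub_distrib]
            exact Finset.sum_congr rfl fun J' _ => map_sub _ _ _
          rw [hsplit] at hw
          linear_combination (norm := abel) -hw
  -- global orthogonality for non-subsets
  have F0 : ∀ (K J' : Finset ι) (u : (∀ i, X i) → ℝ), ¬ J' ⊆ K → H J' (H K u) = 0 :=
    fun K J' u hns => (AB J').1 _ (pdiffZero_of_not_subset (Hdep K u) hns)
  -- second induction: (P4) and (P5) for proper subsets
  have CD : ∀ J : Finset ι, (∀ J' ⊂ J, ∀ g, H J' (H J g) = 0) ∧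
      (∀ g, H J (H J g) = H J g) := by
    intro J
    induction J using Finset.strongInduction with
    | _ J IH =>
      have hC : ∀ J' ⊂ J, ∀ g, H J' (H J g) = 0 := by
        intro J' hJ' g
        have hJne : J.Nonempty := by
          obtain ⟨x, hx, -⟩ := Finset.exists_of_ssubset hJ'
          exact ⟨x, hx⟩
        rw [hHrec J hJne g, map_sub, map_sum]
        have hsum : ∑ K ∈ J.powerset.erase J, H J' (H K (L J g)) = H J' (L J g) := by
          rw [Finset.sum_eq_single J']
          · exact (IH J' hJ').2 (L J g)
          · intro K hK hKne
            have hK2 := Finset.mem_erase.1 hK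
            have hKss : K ⊂ J := (Finset.mem_powerset.1 hK2.2).ssubset_of_ne hK2.1
            by_cases hsub : J' ⊆ K
            · exact (IH K hKss).1 J' (hsub.ssubset_of_ne (Ne.symm hKne)) _
            · exact F0 K J' _ hsub
          · intro hJ'notin
            exact absurd (Finset.mem_erase.2
              ⟨hJ'.ne, Finset.mem_powerset.2 hJ'.subset⟩) hJ'notin
        rw [hsum, sub_self]
      refine ⟨hC, fun g => ?_⟩
      rcases Finset.eq_empty_or_nonempty J with rfl | hJne
      · rw [hH0]
        have hc : E g = fun _ => E g a₀ := funext fun x => hEconst g x a₀ (by simp)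
        calc E (E g) = E (fun _ => E g a₀) := by rw [← hc]
          _ = fun _ => E g a₀ := hEfix _
          _ = E g := hc.symm
      · have hdec := (AB J).2 (H J g) (Hdep J g)
        rw [← Finset.add_sum_erase _ _ (Finset.mem_powerset_self J)] at hdec
        have hzero : ∑ J' ∈ J.powerset.erase J, H J' (H J g) = 0 :=
          Finset.sum_eq_zero fun J' hJ' => by
            have hJ'2 := Finset.mem_erase.1 hJ'
            exact hC J' ((Finset.mem_powerset.1 hJ'2.2).ssubset_of_ne hJ'2.1) g
        rw [hzero, add_zero] at hdec
        exact hdec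
  refine ⟨⟨hH0, fun J hJne g => ?_⟩, fun J g => (AB J).1 g, fun J g => (AB J).2 g,
    fun J g => (CD J).2 g, fun J' J hne g => ?_⟩
  · rw [← hH0]
    exact (CD J).1 ∅ (Finset.empty_ssubset.2 hJne) g
  · by_cases hsub : J' ⊆ J
    · exact (CD J).1 J' (hsub.ssubset_of_ne hne) g
    · exact F0 J J' g hsub
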